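/- Suppose x_1, ..., x_{d²}, y_1, ..., y_{d²} ∈ ℂ^d with each y_i a unit vector, such that for every X ∈ M_d(ℂ), (1/(d+1))·(X + tr(X)·I_d) = Σ_{i=1}^{d²} (x_i y_i*) X (x_i y_i*)*, and suppose the matrices {x_i y_i*}_{i=1}^{d²} are linearly independent in M_d(ℂ). Then for each 1 ≤ i ≤ d² there is a scalar λ_i ∈ ℂ with x_i = λ_i y_i, and consequently there exist d² unit vectors {w_i}_{i=1}^{d²} ⊆ ℂ^d with |⟨w_i, w_j⟩|² = 1/(d+1) for all i ≠ j. -/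

import Mathlib

/-!
Each term `(x y*) X (x y*)*` equals `⟨y, X y⟩ • x x*`. Since `Z` is invertible, every matrix `M`
is `∑ᵢ ((n + 1)⟨yᵢ, M yᵢ⟩ - tr M) • xᵢ xᵢ*`, so the `n²` matrices `xᵢ xᵢ*` form a basis, and
expanding `xⱼ xⱼ*` in it gives `(n + 1)|⟨yᵢ, xⱼ⟩|² = ‖xⱼ‖² + δᵢⱼ`. On the diagonal Cauchy–Schwarz
turns this into `n‖xⱼ‖² ≥ 1`, while `Z 1 = 1` gives `∑ ‖xⱼ‖² = n`; hence `n‖xⱼ‖² = 1` for all `j`,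
Cauchy–Schwarz is an equality, `xⱼ ∥ yⱼ`, and off the diagonal `|⟨yᵢ, yⱼ⟩|² = 1/(n + 1)`.
-/

open Matrix

/-- The rank-one matrix `x y*` with entries `(x y*)_{k,l} = x_k * conj (y_l)`. -/
noncomputable def outer {d : ℕ} (x y : Fin d → ℂ) : Matrix (Fin d) (Fin d) ℂ :=
  fun k l => x k * (starRingEnd ℂ) (y l)

open Module

theorem apply_eq_ite_of_forall_eq_sum_smul {K V ι : Type*} [Field K] [AddCommGroup V]
    [Module K V] [Fintype ι] [DecidableEq ι] {b : ι → V} {c : ι → V → K}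
    (hcard : Fintype.card ι = finrank K V) (hc : ∀ v, v = ∑ i, c i v • b i) (i j : ι) :
    c i (b j) = if i = j then 1 else 0 := by
  have hspan : ⊤ ≤ Submodule.span K (Set.range b) := fun v _ ↦ by
    rw [hc v]
    exact Submodule.sum_mem _ fun i _ ↦ Submodule.smul_mem _ _ (Submodule.subset_span ⟨i, rfl⟩)
  refine Fintype.linearIndependent_iffₛ.mp
    (linearIndependent_of_top_le_span_of_card_eq_finrank hspan hcard)
    (fun i ↦ c i (b j)) (fun i ↦ if i = j then 1 else 0) ?_ i
  simp only [ite_smul, one_smul, zero_smul, Finset.sum_ite_eq', Finset.mem_univ, if_true]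
  exact (hc (b j)).symm

section Outer

variable {n : ℕ}

theorem outer_eq_vecMulVec (u v : Fin n → ℂ) : outer u v = vecMulVec u (star v) := rfl

theorem outer_mul_mul_conjTranspose_outer (u v : Fin n → ℂ) (X : Matrix (Fin n) (Fin n) ℂ) :
    outer u v * X * (outer u v)ᴴ = (star v ⬝ᵥ X *ᵥ v) • outer u u := by
  simp only [outer_eq_vecMulVec]
  rw [conjTranspose_vecMulVec, star_star, vecMulVec_mul,
    vecMulVec_mul_vecMulVec, vecMulVec_smul, ← dotProduct_mulVec]

variable (u v : EuclideanSpace ℂ (Fin n))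

theorem star_dotProduct_self_eq_norm_sq : star (v : Fin n → ℂ) ⬝ᵥ v = (‖v‖ ^ 2 : ℝ) := by
  rw [dotProduct_comm, ← EuclideanSpace.inner_eq_star_dotProduct, inner_self_eq_norm_sq_to_K]
  norm_cast

theorem trace_outer_self : (outer u u).trace = (‖u‖ ^ 2 : ℝ) := by
  rw [outer_eq_vecMulVec, trace_vecMulVec, ← star_dotProduct_self_eq_norm_sq, dotProduct_comm]

theorem star_dotProduct_outer_self_mulVec :
    star (v : Fin n → ℂ) ⬝ᵥ outer u u *ᵥ v = (‖inner ℂ v u‖ ^ 2 : ℝ) := by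
  have hvu : star (v : Fin n → ℂ) ⬝ᵥ u = inner ℂ v u := by
    rw [EuclideanSpace.inner_eq_star_dotProduct, dotProduct_comm]
  have huv : star (u : Fin n → ℂ) ⬝ᵥ v = starRingEnd ℂ (inner ℂ v u) := by
    rw [inner_conj_symm, EuclideanSpace.inner_eq_star_dotProduct, dotProduct_comm]
  rw [outer_eq_vecMulVec, vecMulVec_mulVec, dotProduct_smul, op_smul_eq_smul, smul_eq_mul, hvu,
    huv, RCLike.conj_mul]
  norm_cast

end Outer

noncomputable def zMap (n : ℕ) (X : Matrix (Fin n) (Fin n) ℂ) : Matrix (Fin n) (Fin n) ℂ :=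
  ((n : ℂ) + 1)⁻¹ • (X + X.trace • 1)

theorem zMap_inverse (n : ℕ) (M : Matrix (Fin n) (Fin n) ℂ) :
    zMap n (((n : ℂ) + 1) • M - M.trace • 1) = M := by
  have hn : (n : ℂ) + 1 ≠ 0 := by exact_mod_cast n.succ_ne_zero
  simp only [zMap, trace_sub, trace_smul, trace_one, Fintype.card_fin, smul_eq_mul]
  rw [show ((n : ℂ) + 1) * M.trace - M.trace * n = M.trace by ring, sub_add_cancel, smul_smul,
    inv_mul_cancel₀ hn, one_smul]

theorem zMap_one (n : ℕ) : zMap n 1 = 1 := by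
  simpa [add_smul] using zMap_inverse n 1

def IsRankOneKrausOfZMap {n : ℕ} {ι : Type*} [Fintype ι] (x y : ι → EuclideanSpace ℂ (Fin n)) :
    Prop :=
  ∀ X, zMap n X = ∑ i, outer (x i) (y i) * X * (outer (x i) (y i))ᴴ

namespace IsRankOneKrausOfZMap

variable {n : ℕ} {ι : Type*} [Fintype ι] {x y : ι → EuclideanSpace ℂ (Fin n)}
  (hZ : IsRankOneKrausOfZMap x y)
include hZ

theorem zMap_eq_sum_smul_outer_self (X : Matrix (Fin n) (Fin n) ℂ) :
    zMap n X = ∑ i, (star (y i : Fin n → ℂ) ⬝ᵥ X *ᵥ y i) • outer (x i) (x i) := by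
  simp only [hZ X, outer_mul_mul_conjTranspose_outer]

variable (hy : ∀ i, ‖y i‖ = 1)
include hy

theorem eq_sum_smul_outer_self (M : Matrix (Fin n) (Fin n) ℂ) :
    M = ∑ i, (((n : ℂ) + 1) * (star (y i : Fin n → ℂ) ⬝ᵥ M *ᵥ y i) - M.trace) •
      outer (x i) (x i) := by
  conv_lhs => rw [← zMap_inverse n M, hZ.zMap_eq_sum_smul_outer_self]
  simp only [sub_mulVec, smul_mulVec, one_mulVec, dotProduct_sub, dotProduct_smul,
    star_dotProduct_self_eq_norm_sq, hy, smul_eq_mul]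
  norm_num

theorem sum_outer_self_eq_one : ∑ i, outer (x i) (x i) = 1 := by
  conv_rhs => rw [← zMap_one n, hZ.zMap_eq_sum_smul_outer_self]
  simp [star_dotProduct_self_eq_norm_sq, hy]

theorem sum_norm_sq_eq : ∑ i, ‖x i‖ ^ 2 = n := by
  have h := congrArg trace (hZ.sum_outer_self_eq_one hy)
  simp only [trace_sum, trace_outer_self, trace_one, Fintype.card_fin] at h
  exact_mod_cast h

variable (hcard : Fintype.card ι = n ^ 2)
include hcard

theorem add_one_mul_norm_inner_sq_eq [DecidableEq ι] (i j : ι) :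
    ((n : ℝ) + 1) * ‖inner ℂ (y i) (x j)‖ ^ 2 = ‖x j‖ ^ 2 + if i = j then 1 else 0 := by
  have h := apply_eq_ite_of_forall_eq_sum_smul
    (c := fun i M ↦ ((n : ℂ) + 1) * (star (y i : Fin n → ℂ) ⬝ᵥ M *ᵥ y i) - M.trace)
    (by rw [hcard, finrank_matrix, Fintype.card_fin, finrank_self, mul_one, sq])
    (hZ.eq_sum_smul_outer_self hy) i j
  simp only [star_dotProduct_outer_self_mulVec, trace_outer_self] at h
  have hreal :
      ((n : ℝ) + 1) * ‖inner ℂ (y i) (x j)‖ ^ 2 - ‖x j‖ ^ 2 = if i = j then 1 else 0 := by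
    split_ifs at h ⊢ <;> exact_mod_cast h
  linarith

theorem natCast_mul_norm_sq_eq_one (j : ι) : n * ‖x j‖ ^ 2 = 1 := by
  classical
  have hlow (i : ι) : 1 ≤ (n : ℝ) * ‖x i‖ ^ 2 := by
    have hcs : ‖inner ℂ (y i) (x i)‖ ^ 2 ≤ ‖x i‖ ^ 2 := by
      gcongr
      simpa [hy i] using norm_inner_le_norm (𝕜 := ℂ) (y i) (x i)
    have hdiag := hZ.add_one_mul_norm_inner_sq_eq hy hcard i i
    rw [if_pos rfl] at hdiag
    nlinarith
  have hsum : ∑ _i : ι, (1 : ℝ) = ∑ i, (n : ℝ) * ‖x i‖ ^ 2 := by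
    rw [← Finset.mul_sum, hZ.sum_norm_sq_eq hy, Finset.sum_const, Finset.card_univ, hcard]
    ring
  exact ((Finset.sum_eq_sum_iff_of_le fun i _ ↦ hlow i).mp hsum j (Finset.mem_univ j)).symm

theorem exists_eq_smul (j : ι) : ∃ r : ℂ, x j = r • y j := by
  classical
  have hdiag := hZ.add_one_mul_norm_inner_sq_eq hy hcard j j
  have hnorm := hZ.natCast_mul_norm_sq_eq_one hy hcard j
  rw [if_pos rfl] at hdiag
  have hsq : ‖inner ℂ (y j) (x j)‖ = ‖y j‖ * ‖x j‖ := by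
    rw [hy j, one_mul, ← pow_left_inj₀ (norm_nonneg _) (norm_nonneg _) two_ne_zero]
    apply mul_left_cancel₀ (by positivity : (n : ℝ) + 1 ≠ 0)
    linear_combination hdiag - hnorm
  have hy0 : y j ≠ 0 := norm_ne_zero_iff.mp (by rw [hy j]; exact one_ne_zero)
  exact Or.resolve_left (((norm_inner_eq_norm_tfae ℂ (y j) (x j)).out 0 2).mp hsq) hy0

theorem norm_inner_sq_eq {i j : ι} (hij : i ≠ j) :
    ‖inner ℂ (y i) (y j)‖ ^ 2 = 1 / ((n : ℝ) + 1) := by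
  classical
  obtain ⟨r, hr⟩ := hZ.exists_eq_smul hy hcard j
  have hgram := hZ.add_one_mul_norm_inner_sq_eq hy hcard i j
  have hnorm := hZ.natCast_mul_norm_sq_eq_one hy hcard j
  rw [if_neg hij, add_zero, hr, inner_smul_right, norm_mul, norm_smul, hy j, mul_one] at hgram
  rw [hr, norm_smul, hy j, mul_one] at hnorm
  have hr0 : ‖r‖ ^ 2 ≠ 0 := fun h ↦ by simp [h] at hnorm
  rw [eq_div_iff (by positivity)]
  apply mul_left_cancel₀ hr0
  linear_combination hgram

end IsRankOneKrausOfZMap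

theorem rank_one_kraus_gives_sic {d : ℕ}
    (x y : Fin (d ^ 2) → EuclideanSpace ℂ (Fin d))
    (hy : ∀ i, ‖y i‖ = 1)
    (hrep : ∀ X : Matrix (Fin d) (Fin d) ℂ,
      ((d : ℂ) + 1)⁻¹ • (X + X.trace • (1 : Matrix (Fin d) (Fin d) ℂ)) =
        ∑ i, outer (x i) (y i) * X * (outer (x i) (y i))ᴴ) :
    (∀ i, ∃ lam : ℂ, x i = lam • y i) ∧
    ∃ w : Fin (d ^ 2) → EuclideanSpace ℂ (Fin d),
      (∀ i, ‖w i‖ = 1) ∧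
      (∀ i j, i ≠ j → ‖(inner ℂ (w i) (w j) : ℂ)‖ ^ 2 = 1 / (d + 1)) := by
  have hZ : IsRankOneKrausOfZMap x y := hrep
  have hcard : Fintype.card (Fin (d ^ 2)) = d ^ 2 := Fintype.card_fin _
  exact ⟨hZ.exists_eq_smul hy hcard, y, hy, fun _ _ hij ↦ hZ.norm_inner_sq_eq hy hcard hij⟩
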